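/- arXiv:1408.4983 — 3 statements merged into one kernel-verified Lean document; each statement's English description precedes it below -/
import Mathlib

section
/- Let N ≥ 2 be an integer and η = exp(2πi/N). For every n ≥ 0, Σ_{α=1}^{N−1} ω^N_{n;α} = (N^{n+1} − 1)·B_{n+1}/(n+1). Moreover, for every integer α with N ∤ α, each ω^N_{m;α} lies in the cyclotomic field ℚ(η); ω^N_{m;α} is real whenever m ≥ 1 is odd, and ω^N_{m;α} has real part zero (is purely imaginary) whenever m ≥ 2 is even. -/
open scoped BigOperators

noncomputable section

/-- The standard primitive `N`-th root of unity `η = exp(2πi/N)`. -/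
def rootN (N : ℕ) : ℂ := Complex.exp (2 * (Real.pi : ℂ) * Complex.I / (N : ℂ))

/-- The power series `(exp(X) - 1)/X ∈ ℂ[[X]]`. -/
def expm1DivX : PowerSeries ℂ :=
  PowerSeries.mk fun n => (PowerSeries.coeff (n + 1)) (PowerSeries.exp ℂ - 1)

/-- `ω^N_{n;α}`. -/
def omegaN (N : ℕ) (α : ℤ) (n : ℕ) : ℂ :=
  if (N : ℤ) ∣ α then
    (n.factorial : ℂ) * (PowerSeries.coeff (n + 1)) expm1DivX⁻¹
  else
    (n.factorial : ℂ) *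
      (PowerSeries.coeff n) (PowerSeries.C (rootN N ^ α) * PowerSeries.exp ℂ - 1)⁻¹

/-
The sum over `a` is a partial-fraction identity: since `(ζ^a e^X)^N = e^{NX}`, the geometric
series gives `(ζ^a e^X - 1)⁻¹ (e^{NX} - 1) = ∑_{k<N} ζ^{ak} e^{kX}`, and summing over `a` kills
every `k ≠ 0` by orthogonality of the powers of `ζ`. Multiplied by `X` this reads
`X ∑_a (ζ^a e^X - 1)⁻¹ = NX/(e^{NX} - 1) - X/(e^X - 1)`, whose coefficients are Bernoulli numbers.

For the second part, inverting a power series commutes with ring maps on the coefficients.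
Computing the inverse over `ℚ(η)` and mapping it to `ℂ` shows the coefficients lie in `ℚ(η)`;
complex conjugation sends `η^α` to `η^{-α}`, and `1/(ζ⁻¹e^X - 1) = -1 - 1/(ζe^{-X} - 1)` turns
this into `X ↦ -X`, i.e. `conj ω_m = -(-1)^m ω_m`.
-/

open PowerSeries

theorem IsPrimitiveRoot.sum_pow_pow {K : Type*} [Field K] {ζ : K} {N k : ℕ}
    (hζ : IsPrimitiveRoot ζ N) (hk : k < N) :
    ∑ a ∈ Finset.range N, (ζ ^ k) ^ a = if k = 0 then (N : K) else 0 := by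
  split_ifs with hk0
  · simp [hk0]
  · rw [geom_sum_eq (hζ.pow_ne_one_of_pos_of_lt hk0 hk), pow_right_comm,
      hζ.pow_eq_one, one_pow, sub_self, zero_div]

namespace PowerSeries

variable {K L : Type*} [Field K] [Field L]

theorem ringHom_map_inv {Φ : K⟦X⟧ →+* L⟦X⟧}
    (hΦ : ∀ φ, constantCoeff (Φ φ) = 0 ↔ constantCoeff φ = 0) (φ : K⟦X⟧) :
    Φ φ⁻¹ = (Φ φ)⁻¹ := by
  by_cases hφ : constantCoeff φ = 0
  · rw [inv_eq_zero.2 hφ, inv_eq_zero.2 ((hΦ φ).2 hφ), map_zero]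
  · rw [eq_inv_iff_mul_eq_one (mt (hΦ φ).1 hφ), ← map_mul, PowerSeries.inv_mul_cancel _ hφ,
      map_one]

theorem map_inv (f : K →+* L) (φ : K⟦X⟧) : map f φ⁻¹ = (map f φ)⁻¹ :=
  ringHom_map_inv (fun ψ => by
    rw [← coeff_zero_eq_constantCoeff_apply, ← coeff_zero_eq_constantCoeff_apply, coeff_map,
      _root_.map_eq_zero]) φ

theorem constantCoeff_rescale {R : Type*} [CommSemiring R] (a : R) (φ : R⟦X⟧) :
    constantCoeff (rescale a φ) = constantCoeff φ := by
  rw [← coeff_zero_eq_constantCoeff_apply, coeff_rescale, pow_zero, one_mul,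
    coeff_zero_eq_constantCoeff_apply]

theorem rescale_inv (a : K) (φ : K⟦X⟧) : rescale a φ⁻¹ = (rescale a φ)⁻¹ :=
  ringHom_map_inv (fun ψ => by rw [constantCoeff_rescale]) φ

theorem rescale_C {R : Type*} [CommSemiring R] (a c : R) : rescale a (C c) = C c := by
  ext (_ | n) <;> simp [coeff_rescale, coeff_C]

variable [Algebra ℚ K] [Algebra ℚ L]

theorem map_inv_C_mul_exp_sub_one (f : K →+* L) (c : K) :
    map f (C c * exp K - 1)⁻¹ = (C (f c) * exp L - 1)⁻¹ := by
  rw [map_inv, map_sub, map_mul, map_C, map_exp, map_one]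

theorem inv_C_inv_mul_exp_sub_one {c : K} (hc0 : c ≠ 0) (hc1 : c ≠ 1) :
    (C c⁻¹ * exp K - 1)⁻¹ = -1 - rescale (-1) (C c * exp K - 1)⁻¹ := by
  have hw : constantCoeff (rescale (-1) (C c * exp K - 1)) ≠ 0 := by
    simpa [constantCoeff_rescale, sub_eq_zero] using hc1
  have hw_inv := PowerSeries.mul_inv_cancel _ hw
  have hexp : exp K * rescale (-1) (exp K) = 1 := exp_mul_exp_neg_eq_one
  have hCc : C c⁻¹ * C c = 1 := by rw [← map_mul, inv_mul_cancel₀ hc0, map_one]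
  rw [rescale_inv, inv_eq_iff_mul_eq_one (by simpa [sub_eq_zero] using inv_ne_one.2 hc1)]
  rw [map_sub, map_mul, rescale_C, map_one] at hw_inv ⊢
  set w := C c * rescale (-1) (exp K) - 1
  linear_combination (C c⁻¹ * exp K) * hw_inv - w⁻¹ * C c⁻¹ * C c * hexp - w⁻¹ * hCc

theorem X_mul_sum_inv_C_pow_mul_exp_sub_one {ζ : K} {N : ℕ} (hζ : IsPrimitiveRoot ζ N)
    (hN : 0 < N) :
    X * ∑ a ∈ Finset.Icc 1 (N - 1), (C (ζ ^ a) * exp K - 1)⁻¹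
      = rescale (N : K) (bernoulliPowerSeries K) - bernoulliPowerSeries K := by
  set E := exp K
  have hEN : rescale (N : K) E = E ^ N := (exp_pow_eq_rescale_exp N).symm
  have hEN_ne : E ^ N - 1 ≠ 0 := fun h => by
    have hN0 : (N : K) = 0 := by
      simpa [E, ← hEN, coeff_rescale, coeff_exp] using congrArg (coeff 1) h
    have := algebraRat.charZero K
    exact Nat.cast_ne_zero.2 hN.ne' hN0
  have hterm : ∀ a ∈ Finset.Icc 1 (N - 1),
      (C (ζ ^ a) * E - 1)⁻¹ * (E ^ N - 1) = ∑ k ∈ Finset.range N, C ((ζ ^ k) ^ a) * E ^ k := by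
    intro a ha
    have hv : constantCoeff (C (ζ ^ a) * E - 1) ≠ 0 := by
      rw [Finset.mem_Icc] at ha
      simpa [E, sub_eq_zero] using hζ.pow_ne_one_of_pos_of_lt (by omega) (by omega)
    have hpowN : (C (ζ ^ a) * E) ^ N = E ^ N := by
      rw [mul_pow, ← map_pow, pow_right_comm, hζ.pow_eq_one, one_pow, map_one, one_mul]
    rw [← hpowN, ← geom_sum_mul, mul_comm, mul_assoc, PowerSeries.mul_inv_cancel _ hv, mul_one]
    refine Finset.sum_congr rfl fun k _ => ?_
    rw [mul_pow, ← map_pow, ← pow_mul, ← pow_mul, mul_comm a k]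
  have hsum : (∑ a ∈ Finset.Icc 1 (N - 1), (C (ζ ^ a) * E - 1)⁻¹) * (E ^ N - 1)
      = C (N : K) - ∑ k ∈ Finset.range N, E ^ k := by
    have hIcc : Finset.Icc 1 (N - 1) = Finset.Ico 1 N := by ext; simp; omega
    have hroots : ∀ k ∈ Finset.range N, ∑ a ∈ Finset.Icc 1 (N - 1), (ζ ^ k) ^ a
        = (if k = 0 then (N : K) else 0) - 1 := by
      intro k hk
      rw [← hζ.sum_pow_pow (Finset.mem_range.1 hk), Finset.sum_range_eq_add_Ico _ hN, hIcc,
        pow_zero, add_sub_cancel_left]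
    rw [Finset.sum_mul, Finset.sum_congr rfl hterm, Finset.sum_comm]
    simp_rw [← Finset.sum_mul, ← map_sum]
    rw [Finset.sum_congr rfl fun k hk => by rw [hroots k hk]]
    simp [sub_mul, Finset.sum_sub_distrib, apply_ite C, ite_mul, hN]
  apply mul_right_cancel₀ hEN_ne
  have hB : bernoulliPowerSeries K * (E - 1) = X := bernoulliPowerSeries_mul_exp_sub_one K
  calc X * (∑ a ∈ Finset.Icc 1 (N - 1), (C (ζ ^ a) * E - 1)⁻¹) * (E ^ N - 1)
      = C (N : K) * X - X * ∑ k ∈ Finset.range N, E ^ k := by rw [mul_assoc, hsum]; ring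
    _ = rescale (N : K) (bernoulliPowerSeries K * (E - 1))
          - bernoulliPowerSeries K * (E - 1) * ∑ k ∈ Finset.range N, E ^ k := by
        rw [hB, rescale_X]
    _ = _ := by rw [map_mul, map_sub, map_one, hEN, ← mul_geom_sum]; ring

end PowerSeries

theorem rootN_isPrimitiveRoot {N : ℕ} (hN : 0 < N) : IsPrimitiveRoot (rootN N) N :=
  Complex.isPrimitiveRoot_exp N hN.ne'

theorem omegaN_of_not_dvd {N : ℕ} {α : ℤ} (hα : ¬ (N : ℤ) ∣ α) (n : ℕ) :
    omegaN N α n = n.factorial * coeff n (C (rootN N ^ α) * exp ℂ - 1)⁻¹ :=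
  if_neg hα

theorem sum_omegaN {N : ℕ} (hN : 0 < N) (n : ℕ) :
    ∑ a ∈ Finset.Icc 1 (N - 1), omegaN N (a : ℤ) n
      = ((N : ℂ) ^ (n + 1) - 1) * (bernoulli (n + 1) : ℂ) / (n + 1) := by
  have hω : ∀ a ∈ Finset.Icc 1 (N - 1),
      omegaN N (a : ℤ) n = n.factorial * coeff n (C (rootN N ^ a) * exp ℂ - 1)⁻¹ := by
    intro a ha
    have hdvd : ¬ (N : ℤ) ∣ a := by
      rw [Finset.mem_Icc] at ha
      exact fun h => absurd (Nat.le_of_dvd (by omega) (Int.natCast_dvd_natCast.1 h)) (by omega)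
    rw [omegaN_of_not_dvd hdvd, zpow_natCast]
  rw [Finset.sum_congr rfl hω, ← Finset.mul_sum, ← map_sum, ← coeff_succ_X_mul,
    X_mul_sum_inv_C_pow_mul_exp_sub_one (rootN_isPrimitiveRoot hN) hN, map_sub, coeff_rescale,
    bernoulliPowerSeries, coeff_mk, map_div₀]
  have hn : (n : ℂ) + 1 ≠ 0 := by exact_mod_cast n.succ_ne_zero
  have hfac : (n.factorial : ℂ) ≠ 0 := by exact_mod_cast n.factorial_ne_zero
  simp only [eq_ratCast, Rat.cast_natCast, Nat.factorial_succ]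
  push_cast
  field_simp

theorem coeff_inv_C_mul_exp_sub_one_mem {L : Type*} [Field L] [Algebra ℚ L]
    (F : IntermediateField ℚ L) {c : L} (hc : c ∈ F) (n : ℕ) :
    coeff n (C c * exp L - 1)⁻¹ ∈ F := by
  have h : coeff n (C c * exp L - 1)⁻¹
      = algebraMap F L (coeff n (C (⟨c, hc⟩ : F) * exp F - 1)⁻¹) := by
    rw [← coeff_map, map_inv_C_mul_exp_sub_one]
    rfl
  rw [h]
  exact SetLike.coe_mem _

theorem conj_omegaN {N : ℕ} (hN : 0 < N) {α : ℤ} (hα : ¬ (N : ℤ) ∣ α) {m : ℕ} (hm : m ≠ 0) :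
    starRingEnd ℂ (omegaN N α m) = -(-1) ^ m * omegaN N α m := by
  have hη := rootN_isPrimitiveRoot hN
  have hζ1 : rootN N ^ α ≠ 1 := mt (hη.zpow_eq_one_iff_dvd α).1 hα
  have hζ0 : rootN N ^ α ≠ 0 := zpow_ne_zero α (hη.ne_zero hN.ne')
  have hconj : starRingEnd ℂ (rootN N ^ α) = (rootN N ^ α)⁻¹ := by
    refine (Complex.inv_eq_conj ?_).symm
    rw [norm_zpow, Complex.norm_eq_one_of_pow_eq_one hη.pow_eq_one hN.ne', one_zpow]
  have hcoeff := congrArg (coeff m) (map_inv_C_mul_exp_sub_one (starRingEnd ℂ) (rootN N ^ α))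
  rw [hconj, inv_C_inv_mul_exp_sub_one hζ0 hζ1, coeff_map, map_sub, map_neg, coeff_one, if_neg hm,
    coeff_rescale] at hcoeff
  rw [omegaN_of_not_dvd hα, map_mul, map_natCast, hcoeff]
  ring

theorem stmt_1 (N : ℕ) (hN : 2 ≤ N) :
    (∀ n : ℕ, ∑ a ∈ Finset.Icc 1 (N - 1), omegaN N (a : ℤ) n
        = ((N : ℂ) ^ (n + 1) - 1) * (bernoulli (n + 1) : ℂ) / (n + 1)) ∧
    (∀ α : ℤ, ¬ (N : ℤ) ∣ α →
      (∀ m : ℕ, omegaN N α m ∈ IntermediateField.adjoin ℚ ({rootN N} : Set ℂ)) ∧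
      (∀ m : ℕ, 1 ≤ m → Odd m → (omegaN N α m).im = 0) ∧
      (∀ m : ℕ, 2 ≤ m → Even m → (omegaN N α m).re = 0)) := by
  have hN0 : 0 < N := by omega
  refine ⟨sum_omegaN hN0, fun α hα => ⟨fun m => ?_, fun m hm hodd => ?_, fun m hm heven => ?_⟩⟩
  · have hη : rootN N ∈ IntermediateField.adjoin ℚ ({rootN N} : Set ℂ) :=
      IntermediateField.subset_adjoin ℚ _ rfl
    rw [omegaN_of_not_dvd hα]
    exact mul_mem (natCast_mem _ _) (coeff_inv_C_mul_exp_sub_one_mem _ (zpow_mem hη α) m)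
  · rw [← Complex.conj_eq_iff_im, conj_omegaN hN0 hα (by omega), hodd.neg_one_pow, neg_neg,
      one_mul]
  · have hre := congrArg Complex.re (conj_omegaN hN0 hα (by omega : m ≠ 0))
    rw [heven.neg_one_pow, Complex.conj_re, neg_mul, one_mul, Complex.neg_re] at hre
    linarith

end
end

section
/- Let N be a positive integer, η = exp(2πi/N), α, β ∈ ℤ/Nℤ, and s₁, s₂ positive integers with s₁ + s₂ > 2; set s := s₁ + s₂ − 2. As an identity of holomorphic functions of q on |q| < 1: C(s, s₁−1)·(𝔇[s; α+β])(q)/s = [s₁; α](q)·[s₂; β](q) + C(s, s₁−1)·[s+1; α+β](q) − Σ over positive integers a, b with a + b = s + 2 of ( C(a−1, s₁−1)·[a, b; α+β, β](q) + C(a−1, s₂−1)·[a, b; α+β, α](q) ), where C(·,·) is the binomial coefficient. -/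
/-!
The `n`-th coefficient of `[s₁; α] · [s₂; β]` is a sum over quadruples `(u₁, v₁, u₂, v₂)` of
positive integers with `u₁v₁ + u₂v₂ = n`, weighted by `η^(αv₁ + βv₂) v₁^(s₁-1) v₂^(s₂-1)`.
Split according to the order of `v₁` and `v₂`. For `v₁ < v₂` the substitution
`(u₁, v₁, u₂, v₂) ↦ (u₁ + u₂, v₁, u₂, v₂ - v₁)` is a bijection onto the quadruples with
`u₁ > u₂`, which index the depth-two sums; the new weight `v₁^(s₁-1) (v₁ + v₂)^(s₂-1)` expands
binomially into depth-two weights, and the twist becomes `η^((α+β)v₁ + βv₂)`. The case `v₁ > v₂`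
is the same with the factors exchanged. For `v₁ = v₂ = v` there are `u - 1` ways to write
`u = u₁ + u₂`, and `∑_{uv = n} (u - 1) v^s η^((α+β)v) = n σ_{s-1}(n) - σ_s(n)` produces the
`𝔇`-term and the depth-one term.
-/

open scoped BigOperators

noncomputable section

/-- The multiple divisor sum at level `N`. -/
def mds (N d : ℕ) (s : Fin d → ℕ) (γ : Fin d → ZMod N) (n : ℕ) : ℂ :=
  ∑' uv : (Fin d → ℕ) × (Fin d → ℕ),
    if StrictAnti uv.1 ∧ (∀ i, 0 < uv.1 i) ∧ (∀ i, 0 < uv.2 i) ∧ ∑ i, uv.1 i * uv.2 i = n then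
      rootN N ^ (∑ i, (γ i).val * uv.2 i) * ∏ i, (uv.2 i : ℂ) ^ (s i - 1)
    else 0

/-- The multiple divisor function at level `N`. -/
def mdf (N d : ℕ) (s : Fin d → ℕ) (γ : Fin d → ZMod N) (q : ℂ) : ℂ :=
  (∏ i, ((s i - 1).factorial : ℂ))⁻¹ * ∑' n : ℕ, mds N d s γ (n + 1) * q ^ (n + 1)

/-- `𝔇[s;γ](q)`, where `𝔇 = q·d/dq`. -/
def Dmdf (N d : ℕ) (s : Fin d → ℕ) (γ : Fin d → ZMod N) (q : ℂ) : ℂ :=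
  (∏ i, ((s i - 1).factorial : ℂ))⁻¹ *
    ∑' n : ℕ, ((n + 1 : ℕ) : ℂ) * mds N d s γ (n + 1) * q ^ (n + 1)

open Finset

section DivisorPairs

variable {R : Type*} [CommSemiring R]

def divisorPairs (n : ℕ) : Finset ((ℕ × ℕ) × (ℕ × ℕ)) :=
  (antidiagonal n).biUnion fun m => m.1.divisorsAntidiagonal ×ˢ m.2.divisorsAntidiagonal

lemma mem_divisorPairs {n : ℕ} {x : (ℕ × ℕ) × (ℕ × ℕ)} :
    x ∈ divisorPairs n ↔
      x.1.1 * x.1.2 + x.2.1 * x.2.2 = n ∧ x.1.1 ≠ 0 ∧ x.1.2 ≠ 0 ∧ x.2.1 ≠ 0 ∧ x.2.2 ≠ 0 := by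
  simp only [divisorPairs, mem_biUnion, HasAntidiagonal.mem_antidiagonal, mem_product,
    Nat.mem_divisorsAntidiagonal, Prod.exists]
  constructor
  · rintro ⟨_, _, rfl, ⟨rfl, h₁⟩, rfl, h₂⟩
    rw [mul_ne_zero_iff] at h₁ h₂
    exact ⟨rfl, h₁.1, h₁.2, h₂.1, h₂.2⟩
  · rintro ⟨rfl, h₁, h₂, h₃, h₄⟩
    exact ⟨_, _, rfl, ⟨rfl, mul_ne_zero h₁ h₂⟩, rfl, mul_ne_zero h₃ h₄⟩

lemma sum_antidiagonal_mul_sum_eq_sum_divisorPairs (F G : ℕ → R) (n : ℕ) :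
    ∑ m ∈ antidiagonal n, (∑ p ∈ m.1.divisorsAntidiagonal, F p.2) *
        ∑ p ∈ m.2.divisorsAntidiagonal, G p.2 =
      ∑ x ∈ divisorPairs n, F x.1.2 * G x.2.2 := by
  rw [divisorPairs, sum_biUnion]
  · simp only [sum_mul_sum, sum_product]
  · intro m _ m' _ hne
    refine disjoint_left.2 fun x hx hx' => hne ?_
    simp only [mem_product, Nat.mem_divisorsAntidiagonal] at hx hx'
    exact Prod.ext (hx.1.1.symm.trans hx'.1.1) (hx.2.1.symm.trans hx'.2.1)

def orderedDivisorPairs (n : ℕ) : Finset ((ℕ × ℕ) × (ℕ × ℕ)) :=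
  (divisorPairs n).filter fun x => x.2.1 < x.1.1

lemma mem_orderedDivisorPairs {n : ℕ} {x : (ℕ × ℕ) × (ℕ × ℕ)} :
    x ∈ orderedDivisorPairs n ↔ x ∈ divisorPairs n ∧ x.2.1 < x.1.1 :=
  mem_filter

lemma orderedDivisorPairs_subset (n : ℕ) : orderedDivisorPairs n ⊆ divisorPairs n :=
  filter_subset _ _

lemma sum_divisorPairs_lt (F G : ℕ → R) (n : ℕ) :
    ∑ x ∈ (divisorPairs n).filter (fun x => x.1.2 < x.2.2), F x.1.2 * G x.2.2 =
      ∑ y ∈ orderedDivisorPairs n, F y.1.2 * G (y.1.2 + y.2.2) := by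
  refine sum_nbij' (fun x => ((x.1.1 + x.2.1, x.1.2), (x.2.1, x.2.2 - x.1.2)))
    (fun y => ((y.1.1 - y.2.1, y.1.2), (y.2.1, y.1.2 + y.2.2))) ?_ ?_ ?_ ?_ ?_
  · rintro ⟨⟨u₁, v₁⟩, u₂, v₂⟩ hx
    simp only [mem_filter, mem_orderedDivisorPairs, mem_divisorPairs] at hx ⊢
    obtain ⟨⟨hn, hu₁, hv₁, hu₂, hv₂⟩, hlt⟩ := hx
    refine ⟨⟨?_, by omega, hv₁, hu₂, by omega⟩, by omega⟩
    zify [hlt.le] at hn ⊢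
    linear_combination hn
  · rintro ⟨⟨U₁, W₁⟩, U₂, W₂⟩ hy
    simp only [mem_filter, mem_orderedDivisorPairs, mem_divisorPairs] at hy ⊢
    obtain ⟨⟨hn, hU₁, hW₁, hU₂, hW₂⟩, hlt⟩ := hy
    refine ⟨⟨?_, by omega, hW₁, hU₂, by omega⟩, by omega⟩
    zify [hlt.le] at hn ⊢
    linear_combination hn
  · rintro ⟨⟨u₁, v₁⟩, u₂, v₂⟩ hx
    have hlt : v₁ < v₂ := (mem_filter.1 hx).2
    simp only [Prod.mk.injEq, and_true, true_and]
    omega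
  · rintro ⟨⟨U₁, W₁⟩, U₂, W₂⟩ hy
    have hlt : U₂ < U₁ := (mem_orderedDivisorPairs.1 hy).2
    simp only [Prod.mk.injEq, and_true, true_and]
    omega
  · rintro ⟨⟨u₁, v₁⟩, u₂, v₂⟩ hx
    simp only [mem_filter] at hx
    simp only [add_tsub_cancel_of_le hx.2.le]

lemma sum_divisorPairs_gt (F G : ℕ → R) (n : ℕ) :
    ∑ x ∈ (divisorPairs n).filter (fun x => x.2.2 < x.1.2), F x.1.2 * G x.2.2 =
      ∑ x ∈ (divisorPairs n).filter (fun x => x.1.2 < x.2.2), G x.1.2 * F x.2.2 := by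
  refine sum_nbij' Prod.swap Prod.swap ?_ ?_ (fun _ _ => rfl) (fun _ _ => rfl)
    (fun _ _ => mul_comm _ _) <;>
  · rintro ⟨⟨u₁, v₁⟩, u₂, v₂⟩ hx
    simp only [mem_filter, mem_divisorPairs, Prod.fst_swap, Prod.snd_swap] at hx ⊢
    omega

lemma sum_divisorPairs_eq (F G : ℕ → R) (n : ℕ) :
    ∑ x ∈ (divisorPairs n).filter (fun x => x.1.2 = x.2.2), F x.1.2 * G x.2.2 =
      ∑ p ∈ n.divisorsAntidiagonal, ((p.1 - 1 : ℕ) : R) * (F p.2 * G p.2) := by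
  have hcount (p : ℕ × ℕ) :
      ((p.1 - 1 : ℕ) : R) * (F p.2 * G p.2) = ∑ _t ∈ Ioo 0 p.1, F p.2 * G p.2 := by
    rw [sum_const, Nat.card_Ioo, nsmul_eq_mul, Nat.sub_zero]
  simp only [hcount]
  rw [sum_sigma']
  refine sum_nbij' (fun x => ⟨(x.1.1 + x.2.1, x.1.2), x.1.1⟩)
    (fun z => ((z.2, z.1.2), (z.1.1 - z.2, z.1.2))) ?_ ?_ ?_ ?_ ?_
  · rintro ⟨⟨u₁, v₁⟩, u₂, v₂⟩ hx
    simp only [mem_filter, mem_divisorPairs] at hx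
    obtain ⟨⟨hn, hu₁, hv₁, hu₂, hv₂⟩, rfl⟩ := hx
    simp only [mem_sigma, Nat.mem_divisorsAntidiagonal, mem_Ioo]
    have := Nat.mul_ne_zero hu₁ hv₁
    exact ⟨⟨by rw [← hn]; ring, by omega⟩, by omega, by omega⟩
  · rintro ⟨⟨u, v⟩, t⟩ hz
    simp only [mem_sigma, Nat.mem_divisorsAntidiagonal, mem_Ioo] at hz
    obtain ⟨⟨rfl, hn⟩, ht, htu⟩ := hz
    simp only [mem_filter, mem_divisorPairs]
    refine ⟨⟨by rw [← add_mul, Nat.add_sub_cancel' htu.le], by omega, ?_, by omega, ?_⟩,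
      trivial⟩ <;>
    exact right_ne_zero_of_mul hn
  · rintro ⟨⟨u₁, v₁⟩, u₂, v₂⟩ hx
    have hv : v₁ = v₂ := (mem_filter.1 hx).2
    simp only [Prod.mk.injEq, hv, and_true, true_and]
    omega
  · rintro ⟨⟨u, v⟩, t⟩ hz
    have htu : t < u := (mem_Ioo.1 (mem_sigma.1 hz).2).2
    simp only [Nat.add_sub_cancel' htu.le]
  · rintro ⟨⟨u₁, v₁⟩, u₂, v₂⟩ hx
    rw [(mem_filter.1 hx).2]

theorem sum_antidiagonal_mul_sum_divisorsAntidiagonal (F G : ℕ → R) (n : ℕ) :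
    ∑ m ∈ antidiagonal n, (∑ p ∈ m.1.divisorsAntidiagonal, F p.2) *
        ∑ p ∈ m.2.divisorsAntidiagonal, G p.2 =
      ∑ y ∈ orderedDivisorPairs n, (F y.1.2 * G (y.1.2 + y.2.2) + G y.1.2 * F (y.1.2 + y.2.2)) +
        ∑ p ∈ n.divisorsAntidiagonal, ((p.1 - 1 : ℕ) : R) * (F p.2 * G p.2) := by
  rw [sum_antidiagonal_mul_sum_eq_sum_divisorPairs, sum_add_distrib, ← sum_divisorPairs_lt,
    ← sum_divisorPairs_lt G F, ← sum_divisorPairs_gt F G, ← sum_divisorPairs_eq,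
    ← sum_filter_add_sum_filter_not _ (fun x => x.1.2 < x.2.2), add_assoc,
    ← sum_filter_add_sum_filter_not (filter (fun x => ¬x.1.2 < x.2.2) (divisorPairs n))
      (fun x => x.2.2 < x.1.2), filter_filter, filter_filter]
  congr 2 <;> exact sum_congr (filter_congr fun x _ => by omega) fun _ _ => rfl

end DivisorPairs

section TwistedSigma

variable {R : Type*} [CommRing R]

def twistedSigma (x : R) (t n : ℕ) : R :=
  ∑ p ∈ n.divisorsAntidiagonal, x ^ p.2 * (p.2 : R) ^ t

def twistedSigma₂ (x y : R) (t₁ t₂ n : ℕ) : R :=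
  ∑ p ∈ orderedDivisorPairs n, x ^ p.1.2 * y ^ p.2.2 * ((p.1.2 : R) ^ t₁ * (p.2.2 : R) ^ t₂)

lemma sum_divisorsAntidiagonal_pred_mul (z : R) {k : ℕ} (hk : k ≠ 0) (n : ℕ) :
    ∑ p ∈ n.divisorsAntidiagonal, ((p.1 - 1 : ℕ) : R) * (z ^ p.2 * (p.2 : R) ^ k) =
      n * twistedSigma z (k - 1) n - twistedSigma z k n := by
  obtain ⟨k, rfl⟩ : ∃ m, k = m + 1 := ⟨k - 1, by omega⟩
  rw [twistedSigma, twistedSigma, mul_sum, ← sum_sub_distrib]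
  refine sum_congr rfl fun p hp => ?_
  obtain ⟨hn, hn0⟩ := Nat.mem_divisorsAntidiagonal.1 hp
  rw [Nat.cast_sub (Nat.one_le_iff_ne_zero.2 (left_ne_zero_of_mul (hn ▸ hn0))), ← hn]
  push_cast
  ring

lemma choose_mul_pow_mul_add_pow (a b : R) (k₁ k₂ : ℕ) :
    ((k₁ + k₂).choose k₁ : R) * (a ^ k₁ * (a + b) ^ k₂) =
      ∑ j ∈ range (k₁ + k₂ + 1),
        ((k₁ + k₂).choose j : R) * (j.choose k₁ : R) * (a ^ j * b ^ (k₁ + k₂ - j)) := by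
  rw [add_assoc, sum_range_add, sum_eq_zero fun j hj => by
    rw [Nat.choose_eq_zero_of_lt (mem_range.1 hj)]; simp, zero_add, add_pow, mul_sum, mul_sum]
  refine sum_congr rfl fun i _ => ?_
  rw [← Nat.cast_mul, Nat.choose_mul (Nat.le_add_right k₁ i),
    add_tsub_cancel_left, add_tsub_cancel_left, Nat.add_sub_add_left]
  push_cast
  ring

lemma choose_mul_sum_orderedDivisorPairs (x y : R) (k₁ k₂ n : ℕ) :
    ((k₁ + k₂).choose k₁ : R) * ∑ p ∈ orderedDivisorPairs n,
        x ^ p.1.2 * (p.1.2 : R) ^ k₁ * (y ^ (p.1.2 + p.2.2) * ((p.1.2 + p.2.2 : ℕ) : R) ^ k₂) =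
      ∑ j ∈ range (k₁ + k₂ + 1),
        ((k₁ + k₂).choose j : R) * (j.choose k₁ : R) * twistedSigma₂ (x * y) y j (k₁ + k₂ - j) n := by
  simp only [twistedSigma₂, mul_sum]
  rw [sum_comm]
  refine sum_congr rfl fun p _ => ?_
  calc _ = (x * y) ^ p.1.2 * y ^ p.2.2 *
        (((k₁ + k₂).choose k₁ : R) * ((p.1.2 : R) ^ k₁ * ((p.1.2 : R) + p.2.2) ^ k₂)) := by
        push_cast
        ring
    _ = _ := by
        rw [choose_mul_pow_mul_add_pow, mul_sum]
        exact sum_congr rfl fun j _ => by ring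

theorem choose_mul_natCast_mul_twistedSigma (x y : R) {k₁ k₂ : ℕ} (hk : k₁ + k₂ ≠ 0) (n : ℕ) :
    ((k₁ + k₂).choose k₁ : R) * (n * twistedSigma (x * y) (k₁ + k₂ - 1) n) =
      ((k₁ + k₂).choose k₁ : R) * (∑ m ∈ antidiagonal n,
          twistedSigma x k₁ m.1 * twistedSigma y k₂ m.2 + twistedSigma (x * y) (k₁ + k₂) n) -
        ∑ j ∈ range (k₁ + k₂ + 1),
          (((k₁ + k₂).choose j : R) * (j.choose k₁ : R) * twistedSigma₂ (x * y) y j (k₁ + k₂ - j) n +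
            ((k₁ + k₂).choose j : R) * (j.choose k₂ : R) *
              twistedSigma₂ (x * y) x j (k₁ + k₂ - j) n) := by
  have hconv := sum_antidiagonal_mul_sum_divisorsAntidiagonal
    (fun v => x ^ v * (v : R) ^ k₁) (fun v => y ^ v * (v : R) ^ k₂) n
  have hdiag : ∑ p ∈ n.divisorsAntidiagonal,
      ((p.1 - 1 : ℕ) : R) * (x ^ p.2 * (p.2 : R) ^ k₁ * (y ^ p.2 * (p.2 : R) ^ k₂)) =
        n * twistedSigma (x * y) (k₁ + k₂ - 1) n - twistedSigma (x * y) (k₁ + k₂) n := by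
    rw [← sum_divisorsAntidiagonal_pred_mul _ hk]
    exact sum_congr rfl fun p _ => by ring
  have hβ := choose_mul_sum_orderedDivisorPairs x y k₁ k₂ n
  have hα := choose_mul_sum_orderedDivisorPairs y x k₂ k₁ n
  rw [add_comm k₂ k₁, mul_comm y x, ← Nat.choose_symm_add] at hα
  simp only [sum_add_distrib, hdiag] at hconv
  rw [sum_add_distrib]
  unfold twistedSigma at hconv ⊢
  linear_combination (-((k₁ + k₂).choose k₁ : R)) * hconv - hβ - hα

end TwistedSigma

section Series

lemma divisorPairs_subset (n : ℕ) :
    divisorPairs n ⊆ (Icc 1 n ×ˢ Icc 1 n) ×ˢ (Icc 1 n ×ˢ Icc 1 n) := by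
  intro x hx
  obtain ⟨hn, h₁, h₂, h₃, h₄⟩ := mem_divisorPairs.1 hx
  have := Nat.le_mul_of_pos_right x.1.1 (Nat.pos_of_ne_zero h₂)
  have := Nat.le_mul_of_pos_left x.1.2 (Nat.pos_of_ne_zero h₁)
  have := Nat.le_mul_of_pos_right x.2.1 (Nat.pos_of_ne_zero h₄)
  have := Nat.le_mul_of_pos_left x.2.2 (Nat.pos_of_ne_zero h₃)
  simp only [mem_product, mem_Icc]
  omega

lemma norm_twistedSigma_le {x : ℂ} (hx : ‖x‖ ≤ 1) (t n : ℕ) :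
    ‖twistedSigma x t n‖ ≤ (n : ℝ) ^ (t + 1) := by
  calc ‖twistedSigma x t n‖ ≤ ∑ _p ∈ n.divisorsAntidiagonal, (n : ℝ) ^ t := by
        refine (norm_sum_le _ _).trans (sum_le_sum fun p hp => ?_)
        obtain ⟨hn, hn0⟩ := Nat.mem_divisorsAntidiagonal.1 hp
        have hv : p.2 ≤ n := Nat.le_of_dvd (Nat.pos_of_ne_zero hn0) ⟨p.1, by rw [← hn, mul_comm]⟩
        rw [norm_mul, norm_pow, norm_pow, Complex.norm_natCast]
        calc ‖x‖ ^ p.2 * (p.2 : ℝ) ^ t ≤ 1 * (n : ℝ) ^ t := by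
              gcongr
              · exact pow_le_one₀ (norm_nonneg _) hx
          _ = (n : ℝ) ^ t := one_mul _
    _ ≤ (n : ℝ) ^ (t + 1) := by
        rw [sum_const, nsmul_eq_mul, pow_succ', ← Nat.map_div_right_divisors, card_map]
        gcongr
        exact_mod_cast Nat.card_divisors_le_self n

lemma norm_twistedSigma₂_le {x y : ℂ} (hx : ‖x‖ ≤ 1) (hy : ‖y‖ ≤ 1) (t₁ t₂ n : ℕ) :
    ‖twistedSigma₂ x y t₁ t₂ n‖ ≤ (n : ℝ) ^ (t₁ + t₂ + 4) := by
  calc ‖twistedSigma₂ x y t₁ t₂ n‖ ≤ ∑ _p ∈ orderedDivisorPairs n, (n : ℝ) ^ (t₁ + t₂) := by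
        refine (norm_sum_le _ _).trans (sum_le_sum fun p hp => ?_)
        have hp' := divisorPairs_subset n (orderedDivisorPairs_subset n hp)
        simp only [mem_product, mem_Icc] at hp'
        simp only [norm_mul, norm_pow, Complex.norm_natCast, pow_add]
        calc ‖x‖ ^ p.1.2 * ‖y‖ ^ p.2.2 * ((p.1.2 : ℝ) ^ t₁ * (p.2.2 : ℝ) ^ t₂)
            ≤ 1 * 1 * ((n : ℝ) ^ t₁ * (n : ℝ) ^ t₂) := by
              gcongr
              · exact pow_le_one₀ (norm_nonneg _) hx
              · exact pow_le_one₀ (norm_nonneg _) hy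
              · exact_mod_cast hp'.1.2.2
              · exact_mod_cast hp'.2.2.2
          _ = _ := by ring
    _ ≤ (n : ℝ) ^ (t₁ + t₂ + 4) := by
        rw [sum_const, nsmul_eq_mul, pow_add _ _ 4, mul_comm]
        gcongr
        have := card_le_card ((orderedDivisorPairs_subset n).trans (divisorPairs_subset n))
        simp only [card_product, Nat.card_Icc, add_tsub_cancel_right] at this
        exact_mod_cast this.trans_eq (by ring)

lemma summable_norm_mul_pow_of_norm_le {a : ℕ → ℂ} {K : ℕ} (ha : ∀ n, ‖a n‖ ≤ (n : ℝ) ^ K)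
    {q : ℂ} (hq : ‖q‖ < 1) : Summable fun n => ‖a n * q ^ n‖ := by
  refine (summable_pow_mul_geometric_of_norm_lt_one K (r := ‖q‖) (by simpa)).of_nonneg_of_le
    (fun _ => norm_nonneg _) fun n => ?_
  rw [norm_mul, norm_pow]
  gcongr
  exact ha n

lemma hasSum_sum_antidiagonal_mul_pow {R : Type*} [NormedCommRing R] [CompleteSpace R]
    {a b : ℕ → R} {q : R} (ha : Summable fun n => ‖a n * q ^ n‖)
    (hb : Summable fun n => ‖b n * q ^ n‖) :
    HasSum (fun n => (∑ m ∈ antidiagonal n, a m.1 * b m.2) * q ^ n)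
      ((∑' n, a n * q ^ n) * ∑' n, b n * q ^ n) := by
  have hterm (n : ℕ) : (∑ m ∈ antidiagonal n, a m.1 * b m.2) * q ^ n =
      ∑ m ∈ antidiagonal n, a m.1 * q ^ m.1 * (b m.2 * q ^ m.2) := by
    rw [sum_mul]
    refine sum_congr rfl fun m hm => ?_
    rw [← HasAntidiagonal.mem_antidiagonal.1 hm, pow_add]
    ring
  simp only [hterm]
  rw [tsum_mul_tsum_eq_tsum_sum_antidiagonal_of_summable_norm ha hb]
  exact (summable_norm_sum_mul_antidiagonal_of_summable_norm ha hb).of_norm.hasSum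

theorem choose_mul_tsum_natCast_mul_twistedSigma {x y q : ℂ} (hx : ‖x‖ ≤ 1) (hy : ‖y‖ ≤ 1)
    (hq : ‖q‖ < 1) {k₁ k₂ : ℕ} (hk : k₁ + k₂ ≠ 0) :
    ((k₁ + k₂).choose k₁ : ℂ) * ∑' n : ℕ, n * twistedSigma (x * y) (k₁ + k₂ - 1) n * q ^ n =
      ((k₁ + k₂).choose k₁ : ℂ) * ((∑' n, twistedSigma x k₁ n * q ^ n) *
          (∑' n, twistedSigma y k₂ n * q ^ n) + ∑' n, twistedSigma (x * y) (k₁ + k₂) n * q ^ n) -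
        ∑ j ∈ range (k₁ + k₂ + 1),
          (((k₁ + k₂).choose j : ℂ) * (j.choose k₁ : ℂ) *
              ∑' n, twistedSigma₂ (x * y) y j (k₁ + k₂ - j) n * q ^ n +
            ((k₁ + k₂).choose j : ℂ) * (j.choose k₂ : ℂ) *
              ∑' n, twistedSigma₂ (x * y) x j (k₁ + k₂ - j) n * q ^ n) := by
  have hxy : ‖x * y‖ ≤ 1 := by
    rw [norm_mul]
    exact mul_le_one₀ hx (norm_nonneg _) hy
  have hσ {z : ℂ} (hz : ‖z‖ ≤ 1) (t : ℕ) :=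
    summable_norm_mul_pow_of_norm_le (norm_twistedSigma_le hz t) hq
  have hσ₂ {w : ℂ} (hw : ‖w‖ ≤ 1) (t₁ t₂ : ℕ) :=
    (summable_norm_mul_pow_of_norm_le (norm_twistedSigma₂_le hxy hw t₁ t₂) hq).of_norm.hasSum
  have hsum := (((hasSum_sum_antidiagonal_mul_pow (hσ hx k₁) (hσ hy k₂)).add
      (hσ hxy (k₁ + k₂)).of_norm.hasSum).mul_left ((k₁ + k₂).choose k₁ : ℂ)).sub
    (hasSum_sum (s := range (k₁ + k₂ + 1)) fun j _ => ((hσ₂ hy j (k₁ + k₂ - j)).mul_left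
      (((k₁ + k₂).choose j : ℂ) * (j.choose k₁ : ℂ))).add
      ((hσ₂ hx j (k₁ + k₂ - j)).mul_left (((k₁ + k₂).choose j : ℂ) * (j.choose k₂ : ℂ))))
  rw [← tsum_mul_left, ← hsum.tsum_eq]
  refine tsum_congr fun n => ?_
  rw [← mul_assoc, choose_mul_natCast_mul_twistedSigma x y hk n, sub_mul, sum_mul]
  congr 1
  · ring
  · exact sum_congr rfl fun j _ => by ring

end Series

section LevelN

lemma tsum_ite_eq_sum_of_iff {α M : Type*} [AddCommMonoid M] [TopologicalSpace M]
    {P : α → Prop} [DecidablePred P] {f g : α → M} (s : Finset α) (hP : ∀ a, P a ↔ a ∈ s)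
    (hfg : ∀ a ∈ s, f a = g a) : ∑' a, (if P a then f a else 0) = ∑ a ∈ s, g a := by
  rw [tsum_eq_sum fun a ha => if_neg ((hP a).not.2 ha)]
  exact sum_congr rfl fun a ha => (if_pos ((hP a).2 ha)).trans (hfg a ha)

lemma mds_one (N s : ℕ) (γ : ZMod N) (n : ℕ) :
    mds N 1 ![s] ![γ] n = twistedSigma (rootN N ^ γ.val) (s - 1) n := by
  rw [mds, ← ((Equiv.funUnique (Fin 1) (ℕ × ℕ)).symm.trans
    (Equiv.arrowProdEquivProdArrow _ _ _)).tsum_eq]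
  refine tsum_ite_eq_sum_of_iff _ (fun p => ?_) fun p _ => ?_
  · simp only [Equiv.trans_apply, Equiv.funUnique_symm_apply, Equiv.arrowProdEquivProdArrow_apply,
      uniqueElim_const, Subsingleton.strictAnti, forall_const, univ_unique, Fin.default_eq_zero,
      sum_const, card_singleton, smul_eq_mul, one_mul, true_and, Nat.mem_divisorsAntidiagonal]
    constructor
    · rintro ⟨h₁, h₂, rfl⟩
      exact ⟨rfl, (Nat.mul_pos h₁ h₂).ne'⟩
    · rintro ⟨rfl, h⟩
      exact ⟨Nat.pos_of_ne_zero (left_ne_zero_of_mul h),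
        Nat.pos_of_ne_zero (right_ne_zero_of_mul h), rfl⟩
  · simp [pow_mul]

lemma mds_two (N a b : ℕ) (γ₁ γ₂ : ZMod N) (n : ℕ) :
    mds N 2 ![a, b] ![γ₁, γ₂] n =
      twistedSigma₂ (rootN N ^ γ₁.val) (rootN N ^ γ₂.val) (a - 1) (b - 1) n := by
  rw [mds, ← ((piFinTwoEquiv fun _ => ℕ × ℕ).symm.trans
    (Equiv.arrowProdEquivProdArrow _ _ _)).tsum_eq]
  refine tsum_ite_eq_sum_of_iff _ (fun x => ?_) fun x _ => ?_
  · simp only [Equiv.trans_apply, piFinTwoEquiv_symm_apply, Matrix.finZeroElim_eq_zero,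
      Matrix.zero_empty, Matrix.Fin.cons_vecEmpty, Matrix.Fin.cons_vecCons,
      Equiv.arrowProdEquivProdArrow_apply, Fin.strictAnti_iff_succ_lt, Matrix.cons_val_succ,
      Matrix.cons_val_fin_one, Fin.forall_fin_one, Fin.castSucc_zero, Matrix.cons_val_zero,
      Fin.forall_fin_two, Matrix.cons_val_one, Fin.sum_univ_two, mem_orderedDivisorPairs,
      mem_divisorPairs]
    omega
  · simp [pow_mul, Fin.sum_univ_two, Fin.prod_univ_two, pow_add]

lemma tsum_succ_eq_tsum {M : Type*} [AddCommMonoid M] [TopologicalSpace M] {f : ℕ → M}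
    (h : f 0 = 0) : ∑' n, f (n + 1) = ∑' n, f n :=
  tsum_pnat_eq_tsum_succ.symm.trans (tsum_pnat_eq_tsum_of_eq_zero h)

lemma mdf_one (N s : ℕ) (γ : ZMod N) (q : ℂ) :
    mdf N 1 ![s] ![γ] q =
      ((s - 1).factorial : ℂ)⁻¹ * ∑' n, twistedSigma (rootN N ^ γ.val) (s - 1) n * q ^ n := by
  simp only [mdf, mds_one, Fin.prod_univ_one, Matrix.cons_val_fin_one]
  rw [tsum_succ_eq_tsum (f := fun n => twistedSigma _ _ n * q ^ n) (by simp [twistedSigma])]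

lemma Dmdf_one (N s : ℕ) (γ : ZMod N) (q : ℂ) :
    Dmdf N 1 ![s] ![γ] q = ((s - 1).factorial : ℂ)⁻¹ *
      ∑' n : ℕ, n * twistedSigma (rootN N ^ γ.val) (s - 1) n * q ^ n := by
  simp only [Dmdf, mds_one, Fin.prod_univ_one, Matrix.cons_val_fin_one]
  rw [tsum_succ_eq_tsum (f := fun n : ℕ => n * twistedSigma _ _ n * q ^ n) (by simp)]

lemma mdf_two (N a b : ℕ) (γ₁ γ₂ : ZMod N) (q : ℂ) :
    mdf N 2 ![a, b] ![γ₁, γ₂] q = ((a - 1).factorial * (b - 1).factorial : ℂ)⁻¹ *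
      ∑' n, twistedSigma₂ (rootN N ^ γ₁.val) (rootN N ^ γ₂.val) (a - 1) (b - 1) n * q ^ n := by
  simp only [mdf, mds_two, Fin.prod_univ_two, Matrix.cons_val_zero, Matrix.cons_val_one,
    Matrix.cons_val_fin_one]
  rw [tsum_succ_eq_tsum (f := fun n => twistedSigma₂ _ _ _ _ n * q ^ n)
    (by simp [twistedSigma₂, orderedDivisorPairs, divisorPairs])]

lemma isPrimitiveRoot_rootN {N : ℕ} (hN : N ≠ 0) : IsPrimitiveRoot (rootN N) N :=
  Complex.isPrimitiveRoot_exp N hN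

lemma rootN_pow_val_add {N : ℕ} [NeZero N] (γ δ : ZMod N) :
    rootN N ^ (γ + δ).val = rootN N ^ γ.val * rootN N ^ δ.val := by
  rw [ZMod.val_add, ← pow_eq_pow_mod _ (isPrimitiveRoot_rootN (NeZero.ne N)).pow_eq_one, pow_add]

lemma norm_rootN_pow_le {N : ℕ} (hN : N ≠ 0) (k : ℕ) : ‖rootN N ^ k‖ ≤ 1 := by
  rw [norm_pow, (isPrimitiveRoot_rootN hN).norm'_eq_one hN, one_pow]

end LevelN

lemma inv_factorial_mul_factorial_eq_choose_div {K : Type*} [Field K] [CharZero K] {j k : ℕ}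
    (h : j ≤ k) : ((j.factorial : K) * (k - j).factorial)⁻¹ = k.choose j / k.factorial := by
  rw [Nat.cast_choose K h, div_div_cancel_left' (Nat.cast_ne_zero.2 k.factorial_ne_zero)]

theorem stmt_14 (N : ℕ) (hN : 0 < N) (s₁ s₂ : ℕ) (h1 : 1 ≤ s₁) (h2 : 1 ≤ s₂)
    (h3 : 2 < s₁ + s₂) (α β : ℤ) (q : ℂ) (hq : ‖q‖ < 1) :
    (Nat.choose (s₁ + s₂ - 2) (s₁ - 1) : ℂ) *
        Dmdf N 1 ![s₁ + s₂ - 2] ![((α + β : ℤ) : ZMod N)] q / ((s₁ + s₂ - 2 : ℕ) : ℂ)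
      = mdf N 1 ![s₁] ![(α : ZMod N)] q * mdf N 1 ![s₂] ![(β : ZMod N)] q
        + (Nat.choose (s₁ + s₂ - 2) (s₁ - 1) : ℂ) *
            mdf N 1 ![s₁ + s₂ - 1] ![((α + β : ℤ) : ZMod N)] q
        - ∑ a ∈ Finset.Icc 1 (s₁ + s₂ - 1),
            ((Nat.choose (a - 1) (s₁ - 1) : ℂ) *
                mdf N 2 ![a, s₁ + s₂ - a] ![((α + β : ℤ) : ZMod N), (β : ZMod N)] q
              + (Nat.choose (a - 1) (s₂ - 1) : ℂ) *
                mdf N 2 ![a, s₁ + s₂ - a] ![((α + β : ℤ) : ZMod N), (α : ZMod N)] q) := by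
  have : NeZero N := ⟨hN.ne'⟩
  obtain ⟨k₁, rfl⟩ : ∃ k, s₁ = k + 1 := ⟨s₁ - 1, by omega⟩
  obtain ⟨k₂, rfl⟩ : ∃ k, s₂ = k + 1 := ⟨s₂ - 1, by omega⟩
  have hk : k₁ + k₂ ≠ 0 := by omega
  rw [show k₁ + 1 + (k₂ + 1) - 2 = k₁ + k₂ by omega,
    show k₁ + 1 + (k₂ + 1) - 1 = k₁ + k₂ + 1 by omega, ← Ico_add_one_right_eq_Icc,
    sum_Ico_eq_sum_range, Nat.add_sub_cancel]
  simp only [mdf_one, Dmdf_one, mdf_two, Int.cast_add, rootN_pow_val_add, Nat.add_sub_cancel]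
  have key := choose_mul_tsum_natCast_mul_twistedSigma (norm_rootN_pow_le hN.ne' (α : ZMod N).val)
    (norm_rootN_pow_le hN.ne' (β : ZMod N).val) hq hk
  have hfac : ((k₁.factorial : ℂ) * k₂.factorial)⁻¹ =
      (k₁ + k₂).choose k₁ / (k₁ + k₂).factorial := by
    simpa using inv_factorial_mul_factorial_eq_choose_div (K := ℂ) (Nat.le_add_right k₁ k₂)
  have hlhs (T : ℂ) : ((k₁ + k₂).choose k₁ : ℂ) * (((k₁ + k₂ - 1).factorial : ℂ)⁻¹ * T) /
      ((k₁ + k₂ : ℕ) : ℂ) = ((k₁ + k₂).factorial : ℂ)⁻¹ * ((k₁ + k₂).choose k₁ * T) := by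
    rw [← Nat.mul_factorial_pred hk, Nat.cast_mul]
    field_simp
  rw [hlhs, key, mul_sub, mul_sum]
  congr 1
  · rw [mul_mul_mul_comm, ← mul_inv, hfac]
    ring
  · refine sum_congr rfl fun j hj => ?_
    rw [Nat.add_sub_cancel_left, show k₁ + 1 + (k₂ + 1) - (1 + j) - 1 = k₁ + k₂ - j by omega,
      inv_factorial_mul_factorial_eq_choose_div (Nat.lt_succ_iff.1 (mem_range.1 hj))]
    ring

end
end

section
/- The following two identities of absolutely convergent double series over pairs of integers m > n > 0 hold: (i) 3·Σ_{m>n>0} (−1)^m/(m²n) = Σ_{m>n>0} 1/(m²n) + Σ_{m>n>0} (−1)^n/(m²n) + Σ_{m>n>0} (−1)^{m+n}/(m²n); (ii) 2·Σ_{m>n>0} 1/(m³n) = 2·Σ_{m>n>0} (−1)^m/(m³n) + Σ_{m>n>0} (−1)^m/(m²n²) − Σ_{m>n>0} (−1)^{m+n}/(m²n²). -/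
/-!
Write `k = m - n`. The reflection `n ↦ m - n` of `{0 < n < m}` exchanges `k` and `n`, and
`1/(m²n) + 1/(m²k) = 1/(mnk)`. Splitting the signs by parity, (i) becomes
`Σ_{m even, n odd} 1/(m²n) = Σ_{m odd} 1/(m²n)`. Summing the left side along `m`, and the right
side, symmetrised to `Σ_{k even, n odd} 1/(mnk)`, along `k` (where the inner sum over `n`
telescopes), both sides become `Σ_a O_a/(2a)²` with `O_a = 1 + 1/3 + ⋯ + 1/(2a - 1)`.

Similarly (ii) becomes
`2 Σ_{m odd} 1/(m³n) = Σ_{m even, n odd} 1/(m²n²) - Σ_{m odd, n odd} 1/(m²n²)`.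
This follows by expanding `(Σ_{p ∈ S} 1/p²)²` in two ways, for `S` the positive and the odd
integers: by the diagonal and the two triangles, and over pairs `(k, n)` using
`1/(k²n²) = (1/k + 1/n)²/m²`; together with the homogeneity of `1/(m²nk)` under
`(m, n) ↦ (2m, 2n)`.
-/

open scoped BigOperators

noncomputable section

/-- The double sum `Σ_{m > n > 0} f m n` (as a `tsum` over `ℕ × ℕ`). -/
def dsum (f : ℕ → ℕ → ℝ) : ℝ :=
  ∑' p : ℕ × ℕ, if p.1 > p.2 ∧ p.2 > 0 then f p.1 p.2 else 0

namespace AlternatingEulerSums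

open Function Filter Topology

def dsumTerm (f : ℕ → ℕ → ℝ) (p : ℕ × ℕ) : ℝ := if p.1 > p.2 ∧ p.2 > 0 then f p.1 p.2 else 0

lemma dsum_eq_tsum (f : ℕ → ℕ → ℝ) : dsum f = ∑' p, dsumTerm f p := rfl

def DSummable (f : ℕ → ℕ → ℝ) : Prop := Summable (dsumTerm f)

section Calculus

variable {f g : ℕ → ℕ → ℝ}

lemma DSummable.ite (hf : DSummable f) (P : ℕ → ℕ → Prop) [∀ m n, Decidable (P m n)] :
    DSummable fun m n => if P m n then f m n else 0 :=
  (Summable.indicator hf {p | P p.1 p.2}).congr fun p => by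
    simp only [dsumTerm, Set.indicator_apply, Set.mem_ofPred_eq]
    split_ifs <;> simp_all

lemma dsum_congr (h : ∀ m n, n < m → 0 < n → f m n = g m n) : dsum f = dsum g :=
  tsum_congr fun p => by split_ifs with hp <;> simp_all

lemma DSummable.congr (hf : DSummable f) (h : ∀ m n, n < m → 0 < n → f m n = g m n) :
    DSummable g :=
  Summable.congr hf fun p => by unfold dsumTerm; split_ifs with hp <;> simp_all

lemma DSummable.of_abs_le (hg : DSummable g) (h : ∀ m n, n < m → 0 < n → |f m n| ≤ g m n) :
    DSummable f :=
  Summable.of_norm_bounded hg fun p => by unfold dsumTerm; split_ifs with hp <;> simp_all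

lemma DSummable.add (hf : DSummable f) (hg : DSummable g) : DSummable fun m n => f m n + g m n :=
  (Summable.add hf hg).congr fun p => by unfold dsumTerm; split_ifs <;> simp

lemma DSummable.sub (hf : DSummable f) (hg : DSummable g) : DSummable fun m n => f m n - g m n :=
  (Summable.sub hf hg).congr fun p => by unfold dsumTerm; split_ifs <;> simp

lemma DSummable.const_mul (c : ℝ) (hf : DSummable f) : DSummable fun m n => c * f m n :=
  (Summable.mul_left c hf).congr fun p => by unfold dsumTerm; split_ifs <;> simp

lemma DSummable.neg_one_pow_div (e : ℕ → ℕ → ℕ) (hf : DSummable fun m n => 1 / f m n)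
    (hf0 : ∀ m n, n < m → 0 < n → 0 ≤ f m n) :
    DSummable fun m n => (-1 : ℝ) ^ e m n / f m n :=
  hf.of_abs_le fun m n hnm hn => by
    rw [abs_div, abs_pow, abs_neg, abs_one, one_pow, abs_of_nonneg (hf0 m n hnm hn)]

lemma dsum_add (hf : DSummable f) (hg : DSummable g) :
    dsum (fun m n => f m n + g m n) = dsum f + dsum g := by
  rw [dsum_eq_tsum, dsum_eq_tsum, dsum_eq_tsum, ← Summable.tsum_add hf hg]
  exact tsum_congr fun p => by unfold dsumTerm; split_ifs <;> simp

lemma dsum_sub (hf : DSummable f) (hg : DSummable g) :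
    dsum (fun m n => f m n - g m n) = dsum f - dsum g := by
  rw [dsum_eq_tsum, dsum_eq_tsum, dsum_eq_tsum, ← Summable.tsum_sub hf hg]
  exact tsum_congr fun p => by unfold dsumTerm; split_ifs <;> simp

lemma dsum_const_mul (c : ℝ) : dsum (fun m n => c * f m n) = c * dsum f := by
  rw [dsum_eq_tsum, dsum_eq_tsum, ← tsum_mul_left]
  exact tsum_congr fun p => by unfold dsumTerm; split_ifs <;> simp

end Calculus

def reflect (p : ℕ × ℕ) : ℕ × ℕ := if p.1 > p.2 ∧ p.2 > 0 then (p.1, p.1 - p.2) else p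

lemma reflect_of_pos {m n : ℕ} (h : m > n ∧ n > 0) : reflect (m, n) = (m, m - n) := if_pos h

lemma reflect_of_not_pos {m n : ℕ} (h : ¬(m > n ∧ n > 0)) : reflect (m, n) = (m, n) := if_neg h

lemma reflect_involutive : Involutive reflect := by
  rintro ⟨m, n⟩
  by_cases h : m > n ∧ n > 0
  · rw [reflect_of_pos h, reflect_of_pos (by omega), Prod.mk.injEq]
    omega
  · rw [reflect_of_not_pos h, reflect_of_not_pos h]

lemma dsumTerm_comp_reflect (f : ℕ → ℕ → ℝ) :
    dsumTerm f ∘ reflect = dsumTerm fun m n => f m (m - n) := by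
  ext ⟨m, n⟩
  by_cases h : m > n ∧ n > 0
  · rw [comp_apply, reflect_of_pos h, dsumTerm, dsumTerm, if_pos (by dsimp only; omega), if_pos h]
  · rw [comp_apply, reflect_of_not_pos h, dsumTerm, dsumTerm, if_neg h, if_neg h]

lemma dsum_reflect (f : ℕ → ℕ → ℝ) : dsum (fun m n => f m (m - n)) = dsum f := by
  rw [dsum_eq_tsum, dsum_eq_tsum, ← dsumTerm_comp_reflect]
  exact (reflect_involutive.toPerm _).tsum_eq (dsumTerm f)

lemma DSummable.reflect {f : ℕ → ℕ → ℝ} (hf : DSummable f) :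
    DSummable fun m n => f m (m - n) := by
  rw [DSummable, ← dsumTerm_comp_reflect]
  exact (reflect_involutive.toPerm _).summable_iff.2 hf

section Reindexing

lemma injective_add_fst : Injective fun q : ℕ × ℕ => (q.1 + q.2, q.2) := fun a b h => by
  simp only [Prod.mk.injEq] at h
  ext <;> omega

lemma dsumTerm_eq_zero_of_notMem_range {f : ℕ → ℕ → ℝ} {p : ℕ × ℕ}
    (hp : p ∉ Set.range fun q : ℕ × ℕ => (q.1 + q.2, q.2)) : dsumTerm f p = 0 :=
  if_neg fun h => hp ⟨(p.1 - p.2, p.2), Prod.ext (by dsimp only; omega) rfl⟩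

variable {g : ℕ → ℕ → ℝ}

lemma dsumTerm_sub_comp_add (h0 : ∀ n, g 0 n = 0) (h0' : ∀ k, g k 0 = 0) :
    (dsumTerm fun m n => g (m - n) n) ∘ (fun q : ℕ × ℕ => (q.1 + q.2, q.2))
      = fun q => g q.1 q.2 := by
  ext ⟨k, n⟩
  simp only [comp_apply, dsumTerm, add_tsub_cancel_right]
  split_ifs with h
  · rfl
  · obtain rfl | rfl : k = 0 ∨ n = 0 := by omega
    exacts [(h0 n).symm, (h0' k).symm]

lemma tsum_eq_dsum_sub (h0 : ∀ n, g 0 n = 0) (h0' : ∀ k, g k 0 = 0) :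
    ∑' q : ℕ × ℕ, g q.1 q.2 = dsum fun m n => g (m - n) n := by
  rw [dsum_eq_tsum, ← injective_add_fst.tsum_eq fun p hp =>
    by_contra fun h => hp (dsumTerm_eq_zero_of_notMem_range h)]
  exact congrArg tsum (dsumTerm_sub_comp_add h0 h0').symm

lemma summable_iff_dsummable_sub (h0 : ∀ n, g 0 n = 0) (h0' : ∀ k, g k 0 = 0) :
    (Summable fun q : ℕ × ℕ => g q.1 q.2) ↔ DSummable fun m n => g (m - n) n := by
  rw [DSummable, ← injective_add_fst.summable_iff fun p => dsumTerm_eq_zero_of_notMem_range,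
    dsumTerm_sub_comp_add h0 h0']

lemma injective_even_odd : Injective fun q : ℕ × ℕ => (2 * q.1, 2 * q.2 + 1) := fun a b h => by
  simp only [Prod.mk.injEq] at h
  ext <;> omega

lemma tsum_ite_even_odd (F : ℕ × ℕ → ℝ) :
    ∑' p : ℕ × ℕ, (if Even p.1 ∧ Odd p.2 then F p else 0)
      = ∑' q : ℕ × ℕ, F (2 * q.1, 2 * q.2 + 1) := by
  rw [← injective_even_odd.tsum_eq]
  · simp
  · intro p hp
    obtain ⟨⟨r, hr⟩, ⟨s, hs⟩⟩ : Even p.1 ∧ Odd p.2 := by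
      by_contra h
      exact hp (if_neg h)
    exact ⟨(r, s), Prod.ext (by dsimp only; omega) hs.symm⟩

lemma injective_even_even : Injective fun q : ℕ × ℕ => (2 * q.1, 2 * q.2) := fun a b h => by
  simp only [Prod.mk.injEq] at h
  ext <;> omega

lemma tsum_ite_even_even (F : ℕ × ℕ → ℝ) :
    ∑' p : ℕ × ℕ, (if Even p.1 ∧ Even p.2 then F p else 0)
      = ∑' q : ℕ × ℕ, F (2 * q.1, 2 * q.2) := by
  rw [← injective_even_even.tsum_eq]
  · simp
  · intro p hp
    obtain ⟨⟨r, hr⟩, ⟨s, hs⟩⟩ : Even p.1 ∧ Even p.2 := by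
      by_contra h
      exact hp (if_neg h)
    exact ⟨(r, s), Prod.ext (by dsimp only; omega) (by dsimp only; omega)⟩

lemma dsum_ite_even_odd (f : ℕ → ℕ → ℝ) :
    dsum (fun m n => if Even m ∧ Odd n then f m n else 0)
      = ∑' q : ℕ × ℕ, dsumTerm f (2 * q.1, 2 * q.2 + 1) := by
  rw [dsum_eq_tsum, ← tsum_ite_even_odd]
  exact tsum_congr fun p => by simp only [dsumTerm]; split_ifs <;> simp_all

lemma dsum_ite_even_even (f : ℕ → ℕ → ℝ) :
    dsum (fun m n => if Even m ∧ Even n then f m n else 0)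
      = dsum fun m n => f (2 * m) (2 * n) := by
  calc dsum _ = ∑' p : ℕ × ℕ, (if Even p.1 ∧ Even p.2 then dsumTerm f p else 0) :=
        tsum_congr fun p => by simp only [dsumTerm]; split_ifs <;> simp_all
    _ = ∑' q : ℕ × ℕ, dsumTerm f (2 * q.1, 2 * q.2) := tsum_ite_even_even _
    _ = _ := tsum_congr fun q => by simp only [dsumTerm]; split_ifs <;> first | rfl | omega

end Reindexing

lemma rpow_three_halves_mul_le {x y : ℝ} (hy : 0 ≤ y) (hyx : y ≤ x) :
    x ^ (3 / 2 : ℝ) * y ^ (3 / 2 : ℝ) ≤ x ^ 2 * y := by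
  have hx : 0 ≤ x := hy.trans hyx
  have split : ∀ z : ℝ, 0 ≤ z → z ^ (3 / 2 : ℝ) = z ^ (1 / 2 : ℝ) * z := fun z hz => by
    rw [← Real.rpow_add_one' hz (by norm_num)]; norm_num
  calc x ^ (3 / 2 : ℝ) * y ^ (3 / 2 : ℝ)
      = x ^ (3 / 2 : ℝ) * y ^ (1 / 2 : ℝ) * y := by rw [split y hy]; ring
    _ ≤ x ^ (3 / 2 : ℝ) * x ^ (1 / 2 : ℝ) * y := by gcongr
    _ = x ^ 2 * y := by
      rw [← Real.rpow_add' hx (by norm_num), ← Real.rpow_natCast]; norm_num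

lemma dsummable_one_div_sq_mul : DSummable fun m n => 1 / ((m : ℝ) ^ 2 * n) := by
  have h := Real.summable_one_div_nat_rpow.2 (by norm_num : (1 : ℝ) < 3 / 2)
  refine Summable.of_nonneg_of_le (fun p => ?_) (fun p => ?_)
    (h.mul_of_nonneg h (fun _ => by positivity) (fun _ => by positivity))
  · unfold dsumTerm; split_ifs <;> positivity
  · unfold dsumTerm
    split_ifs with hp
    · rw [one_div_mul_one_div]
      have hn : (0 : ℝ) < p.2 := by exact_mod_cast hp.2
      have hm : (0 : ℝ) < p.1 := by exact_mod_cast hp.2.trans hp.1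
      refine one_div_le_one_div_of_le (by positivity) ?_
      exact rpow_three_halves_mul_le (Nat.cast_nonneg _) (by exact_mod_cast hp.1.le)
    · positivity

lemma cast_pos_of_lt {m n : ℕ} (h : n < m) (hn : 0 < n) :
    (0 : ℝ) < n ∧ (0 : ℝ) < m ∧ (0 : ℝ) < ((m - n : ℕ) : ℝ) :=
  ⟨by exact_mod_cast hn, by exact_mod_cast hn.trans h, by exact_mod_cast Nat.sub_pos_of_lt h⟩

lemma dsummable_one_div_mul_mul_sub :
    DSummable fun m n => 1 / ((m : ℝ) * n * (m - n : ℕ)) :=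
  (dsummable_one_div_sq_mul.add dsummable_one_div_sq_mul.reflect).congr fun m n h hn => by
    obtain ⟨hn', hm', hmn'⟩ := cast_pos_of_lt h hn
    field_simp
    push_cast [Nat.cast_sub h.le]
    ring

lemma dsummable_one_div_sq_mul_mul_sub :
    DSummable fun m n => 1 / ((m : ℝ) ^ 2 * n * (m - n : ℕ)) :=
  dsummable_one_div_sq_mul.of_abs_le fun m n h hn => by
    obtain ⟨hn', hm', hmn'⟩ := cast_pos_of_lt h hn
    have : (1 : ℝ) ≤ (m - n : ℕ) := by exact_mod_cast Nat.sub_pos_of_lt h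
    rw [abs_of_pos (by positivity)]
    exact one_div_le_one_div_of_le (by positivity) (le_mul_of_one_le_right (by positivity) this)

lemma dsummable_one_div_sq_mul_sq : DSummable fun m n => 1 / ((m : ℝ) ^ 2 * (n : ℝ) ^ 2) :=
  dsummable_one_div_sq_mul.of_abs_le fun m n h hn => by
    obtain ⟨hn', hm', -⟩ := cast_pos_of_lt h hn
    have : (1 : ℝ) ≤ n := by exact_mod_cast hn
    rw [abs_of_pos (by positivity)]
    gcongr
    nlinarith

lemma dsummable_one_div_cube_mul : DSummable fun m n => 1 / ((m : ℝ) ^ 3 * n) :=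
  dsummable_one_div_sq_mul.of_abs_le fun m n h hn => by
    obtain ⟨hn', hm', -⟩ := cast_pos_of_lt h hn
    have : (1 : ℝ) ≤ m := by exact_mod_cast hn.trans h
    rw [abs_of_pos (by positivity)]
    gcongr
    nlinarith

lemma hasSum_sub_add_of_antitone {u : ℕ → ℝ} (hu : Antitone u)
    (hlim : Tendsto u atTop (𝓝 0)) (k : ℕ) :
    HasSum (fun n => u n - u (n + k)) (∑ i ∈ Finset.range k, u i) := by
  rw [hasSum_iff_tendsto_nat_of_nonneg fun n => sub_nonneg.2 (hu (Nat.le_add_right n k))]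
  have partial_sum : ∀ N, ∑ n ∈ Finset.range N, (u n - u (n + k))
      = ∑ i ∈ Finset.range k, u i - ∑ i ∈ Finset.range k, u (N + i) := fun N => by
    have h₁ := Finset.sum_range_add u N k
    have h₂ := Finset.sum_range_add u k N
    rw [add_comm k N] at h₂
    simp only [Finset.sum_sub_distrib, add_comm _ k]
    linarith
  simp only [partial_sum]
  simpa using tendsto_const_nhds.sub (tendsto_finsetSum (Finset.range k) fun i _ =>
    hlim.comp (tendsto_add_atTop_nat i))

def oddHarmonic (a : ℕ) : ℝ := ∑ j ∈ Finset.range a, 1 / (2 * j + 1 : ℝ)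

lemma dsum_even_odd_eq_tsum_oddHarmonic :
    dsum (fun m n => if Even m ∧ Odd n then 1 / ((m : ℝ) ^ 2 * n) else 0)
      = ∑' a : ℕ, oddHarmonic a / (2 * a : ℝ) ^ 2 := by
  have hs : Summable fun q : ℕ × ℕ =>
      dsumTerm (fun m n => 1 / ((m : ℝ) ^ 2 * n)) (2 * q.1, 2 * q.2 + 1) :=
    dsummable_one_div_sq_mul.comp_injective injective_even_odd
  rw [dsum_ite_even_odd, hs.tsum_prod]
  refine tsum_congr fun a => ?_
  simp only [dsumTerm]
  rw [tsum_eq_sum (s := Finset.range a) fun j hj => if_neg (by simp at hj; omega),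
    oddHarmonic, Finset.sum_div]
  refine Finset.sum_congr rfl fun j hj => ?_
  rw [Finset.mem_range] at hj
  rw [if_pos (by omega)]
  have ha : (0 : ℝ) < a := by exact_mod_cast (j.zero_le.trans_lt hj)
  push_cast
  field_simp

lemma dsum_odd_eq_dsum_odd_odd :
    dsum (fun m n => if Odd m then 1 / ((m : ℝ) ^ 2 * n) else 0)
      = dsum (fun m n => if Odd m ∧ Odd n then 1 / ((m : ℝ) * n * (m - n : ℕ)) else 0) := by
  have hb := dsummable_one_div_sq_mul
  have reflected : dsum (fun m n => if Odd m ∧ Odd n then 1 / ((m : ℝ) ^ 2 * (m - n : ℕ)) else 0)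
      = dsum (fun m n => if Odd m ∧ Even n then 1 / ((m : ℝ) ^ 2 * n) else 0) := by
    rw [← dsum_reflect]
    refine dsum_congr fun m n h hn => ?_
    rw [Nat.sub_sub_self h.le]
    by_cases hm : Odd m <;> simp [hm, Nat.odd_sub h.le]
  have hoo := hb.ite fun m n => Odd m ∧ Odd n
  have hoo' := hb.reflect.ite fun m n => Odd m ∧ Odd n
  calc dsum (fun m n => if Odd m then 1 / ((m : ℝ) ^ 2 * n) else 0)
      = dsum (fun m n => if Odd m ∧ Odd n then 1 / ((m : ℝ) ^ 2 * n) else 0)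
        + dsum (fun m n => if Odd m ∧ Even n then 1 / ((m : ℝ) ^ 2 * n) else 0) := by
        rw [← dsum_add (hb.ite _) (hb.ite _)]
        refine dsum_congr fun m n _ _ => ?_
        rcases Nat.even_or_odd n with hn | hn
        · simp [hn, Nat.not_odd_iff_even.2 hn]
        · simp [hn, Nat.not_even_iff_odd.2 hn]
    _ = _ := by
        rw [← reflected, ← dsum_add hoo hoo']
        refine dsum_congr fun m n h hn => ?_
        obtain ⟨hn', hm', hmn'⟩ := cast_pos_of_lt h hn
        split_ifs
        · field_simp
          push_cast [Nat.cast_sub h.le]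
          ring
        · simp

lemma tsum_one_div_odd_mul_odd_add (a : ℕ) :
    ∑' j : ℕ, 1 / ((2 * a + (2 * j + 1) : ℝ) * (2 * j + 1) * (2 * a))
      = oddHarmonic a / (2 * a : ℝ) ^ 2 := by
  rcases Nat.eq_zero_or_pos a with rfl | ha
  · simp [oddHarmonic]
  have ha' : (0 : ℝ) < a := by exact_mod_cast ha
  set u : ℕ → ℝ := fun j => 1 / (2 * j + 1 : ℝ)
  have hu : Antitone u := fun i j hij => by simp only [u]; gcongr
  have hlim : Tendsto u atTop (𝓝 0) :=
    squeeze_zero (fun j => by positivity) (fun j => by simp only [u]; gcongr; linarith)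
      tendsto_one_div_add_atTop_nhds_zero_nat
  have partial_fractions : ∀ j : ℕ, 1 / ((2 * a + (2 * j + 1) : ℝ) * (2 * j + 1) * (2 * a))
      = (1 / (2 * a : ℝ)) ^ 2 * (u j - u (j + a)) := fun j => by
    simp only [u]; push_cast; field_simp; ring
  rw [tsum_congr partial_fractions, tsum_mul_left, (hasSum_sub_add_of_antitone hu hlim a).tsum_eq,
    oddHarmonic]
  ring

lemma dsum_odd_odd_eq_tsum_oddHarmonic :
    dsum (fun m n => if Odd m ∧ Odd n then 1 / ((m : ℝ) * n * (m - n : ℕ)) else 0)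
      = ∑' a : ℕ, oddHarmonic a / (2 * a : ℝ) ^ 2 := by
  set F : ℕ × ℕ → ℝ := fun q => 1 / (((q.1 + q.2 : ℕ) : ℝ) * q.2 * q.1)
  set g : ℕ → ℕ → ℝ := fun k n => if Even k ∧ Odd n then F (k, n) else 0
  -- `g 0 n = 0` because `1 / 0 = 0`.
  have h0 : ∀ n, g 0 n = 0 := by simp [g, F]
  have h0' : ∀ k, g k 0 = 0 := by simp [g]
  have hg : ∀ m n, n < m → 0 < n →
      g (m - n) n = if Odd m ∧ Odd n then 1 / ((m : ℝ) * n * (m - n : ℕ)) else 0 :=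
    fun m n h _ => by
      have parity : Even (m - n) ∧ Odd n ↔ Odd m ∧ Odd n := by
        rw [Nat.even_sub h.le, ← Nat.not_even_iff_odd, ← Nat.not_even_iff_odd]
        tauto
      simp only [g, F, Nat.sub_add_cancel h.le, parity]
  have hsum : Summable fun q : ℕ × ℕ => g q.1 q.2 :=
    (summable_iff_dsummable_sub h0 h0').2 <|
      (dsummable_one_div_mul_mul_sub.ite _).congr fun m n h hn => (hg m n h hn).symm
  have hF : Summable fun q : ℕ × ℕ => F (2 * q.1, 2 * q.2 + 1) := by
    simpa [g, comp_def] using hsum.comp_injective injective_even_odd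
  rw [← dsum_congr hg, ← tsum_eq_dsum_sub h0 h0']
  change ∑' q : ℕ × ℕ, (if Even q.1 ∧ Odd q.2 then F q else 0) = _
  rw [tsum_ite_even_odd F, hF.tsum_prod]
  refine tsum_congr fun a => ?_
  rw [← tsum_one_div_odd_mul_odd_add a]
  refine tsum_congr fun j => ?_
  simp only [F]
  push_cast
  ring

lemma dsum_even_odd_eq_dsum_odd :
    dsum (fun m n => if Even m ∧ Odd n then 1 / ((m : ℝ) ^ 2 * n) else 0)
      = dsum (fun m n => if Odd m then 1 / ((m : ℝ) ^ 2 * n) else 0) := by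
  rw [dsum_even_odd_eq_tsum_oddHarmonic, dsum_odd_eq_dsum_odd_odd,
    dsum_odd_odd_eq_tsum_oddHarmonic]

theorem alternating_relation_weight_three :
    3 * dsum (fun m n => (-1 : ℝ) ^ m / ((m : ℝ) ^ 2 * n))
      = dsum (fun m n => 1 / ((m : ℝ) ^ 2 * n))
        + dsum (fun m n => (-1 : ℝ) ^ n / ((m : ℝ) ^ 2 * n))
        + dsum (fun m n => (-1 : ℝ) ^ (m + n) / ((m : ℝ) ^ 2 * n)) := by
  have hb := dsummable_one_div_sq_mul
  have hs : ∀ e : ℕ → ℕ → ℕ, DSummable fun m n => (-1 : ℝ) ^ e m n / ((m : ℝ) ^ 2 * n) :=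
    fun e => hb.neg_one_pow_div e fun m n _ _ => by positivity
  have combination := dsum_congr (f := fun m n => 3 * ((-1 : ℝ) ^ m / ((m : ℝ) ^ 2 * n))
      - (1 / ((m : ℝ) ^ 2 * n) + (-1 : ℝ) ^ n / ((m : ℝ) ^ 2 * n)
        + (-1 : ℝ) ^ (m + n) / ((m : ℝ) ^ 2 * n)))
    (g := fun m n => 4 * ((if Even m ∧ Odd n then 1 / ((m : ℝ) ^ 2 * n) else 0)
      - (if Odd m then 1 / ((m : ℝ) ^ 2 * n) else 0))) fun m n _ _ => by
    by_cases hm : Even m <;> by_cases hn : Even n <;>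
      simp [Nat.even_add, hm, hn, ← Nat.not_even_iff_odd] <;> ring
  rw [dsum_sub ((hs _).const_mul 3) ((hb.add (hs _)).add (hs _)), dsum_const_mul,
    dsum_add (hb.add (hs _)) (hs _), dsum_add hb (hs _), dsum_const_mul,
    dsum_sub (hb.ite _) (hb.ite _), dsum_even_odd_eq_dsum_odd, sub_self, mul_zero] at combination
  linarith

section Squares

variable {u : ℕ → ℝ}

lemma summable_prod_mul (hu : Summable u) : Summable fun q : ℕ × ℕ => u q.1 * u q.2 :=
  summable_mul_of_summable_norm (by simpa using hu.abs) (by simpa using hu.abs)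

lemma sq_tsum_eq_tsum_mul (hu : Summable u) : (∑' p, u p) ^ 2 = ∑' q : ℕ × ℕ, u q.1 * u q.2 := by
  rw [sq, tsum_mul_tsum_of_summable_norm (by simpa using hu.abs) (by simpa using hu.abs)]

lemma sq_tsum_eq_dsum_sub_mul (hu : Summable u) (h0 : u 0 = 0) :
    (∑' p, u p) ^ 2 = dsum fun m n => u (m - n) * u n := by
  rw [sq_tsum_eq_tsum_mul hu]
  exact tsum_eq_dsum_sub (g := fun k n => u k * u n) (by simp [h0]) (by simp [h0])

lemma sq_tsum_eq_two_mul_dsum_add (hu : Summable u) (h0 : u 0 = 0) :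
    (∑' p, u p) ^ 2 = 2 * dsum (fun m n => u m * u n) + ∑' p, u p ^ 2 := by
  set G := dsumTerm fun m n => u m * u n
  set D : ℕ × ℕ → ℝ := fun q => if q.1 = q.2 then u q.1 * u q.2 else 0
  have hprod := summable_prod_mul hu
  have hG : Summable G := (hprod.indicator {q | q.1 > q.2 ∧ q.2 > 0}).congr fun q => by
    simp only [G, dsumTerm, Set.indicator_apply, Set.mem_ofPred_eq]
  have hG' : Summable fun q : ℕ × ℕ => G q.swap := hG.comp_injective Prod.swap_injective
  have hD : Summable D := (hprod.indicator {q | q.1 = q.2}).congr fun q => by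
    simp only [D, Set.indicator_apply, Set.mem_ofPred_eq]
  have split : ∀ q : ℕ × ℕ, u q.1 * u q.2 = G q + G q.swap + D q := by
    rintro ⟨m, n⟩
    simp only [G, D, dsumTerm, Prod.swap]
    rcases lt_trichotomy m n with h | rfl | h
    · rcases Nat.eq_zero_or_pos m with rfl | hm
      · simp [h0]
      · simp [h, hm, h.ne, h.not_gt, mul_comm]
    · simp
    · rcases Nat.eq_zero_or_pos n with rfl | hn
      · simp [h0]
      · simp [h, hn, h.ne', h.not_gt]
  have swap : ∑' q : ℕ × ℕ, G q.swap = ∑' q, G q := (Equiv.prodComm ℕ ℕ).tsum_eq G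
  have diagonal : ∑' q, D q = ∑' p, u p ^ 2 := by
    have hinj : Injective fun p : ℕ => (p, p) := fun a b h => congrArg Prod.fst h
    rw [← hinj.tsum_eq]
    · simp [D, sq]
    · rintro ⟨m, n⟩ h
      by_cases hmn : m = n
      · exact ⟨m, by rw [hmn]⟩
      · exact absurd (if_neg hmn) h
  rw [sq_tsum_eq_tsum_mul hu, tsum_congr split, (hG.add hG').tsum_add hD, hG.tsum_add hG',
    diagonal, swap, ← dsum_eq_tsum]
  ring

end Squares

lemma two_mul_dsum_odd_cube_mul_eq_dsum_mul_sub :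
    2 * dsum (fun m n => if Odd m then 1 / ((m : ℝ) ^ 3 * n) else 0)
      = dsum (fun m n => if Odd m then 1 / ((m : ℝ) ^ 2 * n * (m - n : ℕ)) else 0) := by
  have h := dsummable_one_div_cube_mul.ite fun m _ => Odd m
  rw [two_mul]
  nth_rw 2 [← dsum_reflect]
  rw [← dsum_add h h.reflect]
  refine dsum_congr fun m n hnm hn => ?_
  obtain ⟨hn', hm', hmn'⟩ := cast_pos_of_lt hnm hn
  split_ifs
  · field_simp
    push_cast [Nat.cast_sub hnm.le]
    ring
  · simp

lemma dsum_one_div_sub_sq_mul_sq (c : ℕ → ℕ → Prop) [∀ m n, Decidable (c m n)]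
    (hc : ∀ m n, n < m → 0 < n → (c m (m - n) ↔ c m n)) :
    dsum (fun m n => if c m n then 1 / (((m - n : ℕ) : ℝ) ^ 2 * (n : ℝ) ^ 2) else 0)
      = 2 * dsum (fun m n => if c m n then 1 / ((m : ℝ) ^ 2 * (n : ℝ) ^ 2) else 0)
        + 2 * dsum (fun m n => if c m n then 1 / ((m : ℝ) ^ 2 * n * (m - n : ℕ)) else 0) := by
  set e := fun m n => if c m n then 1 / ((m : ℝ) ^ 2 * (n : ℝ) ^ 2) else 0
  set w := fun m n => if c m n then 1 / ((m : ℝ) ^ 2 * n * (m - n : ℕ)) else 0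
  have he : DSummable e := dsummable_one_div_sq_mul_sq.ite c
  have hw : DSummable w := dsummable_one_div_sq_mul_mul_sub.ite c
  calc _ = dsum (fun m n => e m n + e m (m - n) + 2 * w m n) := dsum_congr fun m n h hn => by
        obtain ⟨hn', hm', hmn'⟩ := cast_pos_of_lt h hn
        simp only [e, w, hc m n h hn]
        split_ifs
        · field_simp
          push_cast [Nat.cast_sub h.le]
          ring
        · simp
    _ = 2 * dsum e + 2 * dsum w := by
        rw [dsum_add (he.add he.reflect) (hw.const_mul 2), dsum_add he he.reflect, dsum_reflect,
          dsum_const_mul]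
        ring

lemma tsum_sq_one_div_sq_eq_two_mul_dsum :
    ∑' p : ℕ, (1 / (p : ℝ) ^ 2) ^ 2
      = 2 * dsum (fun m n => 1 / ((m : ℝ) ^ 2 * n * (m - n : ℕ))) := by
  have hu : Summable fun p : ℕ => 1 / (p : ℝ) ^ 2 := Real.summable_one_div_nat_pow.2 one_lt_two
  have h := (sq_tsum_eq_dsum_sub_mul hu (by simp)).symm.trans
    (sq_tsum_eq_two_mul_dsum_add hu (by simp))
  have hc := dsum_one_div_sub_sq_mul_sq (fun _ _ => True) fun _ _ _ _ => Iff.rfl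
  simp only [if_true] at hc
  simp only [one_div_mul_one_div] at h
  linarith

lemma odd_sub_and_odd_iff {m n : ℕ} (h : n ≤ m) : Odd (m - n) ∧ Odd n ↔ Even m ∧ Odd n := by
  rw [Nat.odd_sub h, ← Nat.not_even_iff_odd, ← Nat.not_even_iff_odd]
  tauto

lemma two_mul_dsum_even_odd_add_eq :
    2 * dsum (fun m n => if Even m ∧ Odd n then 1 / ((m : ℝ) ^ 2 * (n : ℝ) ^ 2) else 0)
      + 2 * dsum (fun m n => if Even m ∧ Odd n then 1 / ((m : ℝ) ^ 2 * n * (m - n : ℕ)) else 0)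
    = 2 * dsum (fun m n => if Odd m ∧ Odd n then 1 / ((m : ℝ) ^ 2 * (n : ℝ) ^ 2) else 0)
      + ∑' p : ℕ, (if Odd p then 1 / (p : ℝ) ^ 2 else 0) ^ 2 := by
  set u : ℕ → ℝ := fun p => if Odd p then 1 / (p : ℝ) ^ 2 else 0
  have hu : Summable u := (Real.summable_one_div_nat_pow.2 one_lt_two).of_nonneg_of_le
    (fun p => by simp only [u]; split_ifs <;> positivity)
    (fun p => by simp only [u]; split_ifs <;> simp)
  have h0 : u 0 = 0 := by simp [u]
  have h := (sq_tsum_eq_dsum_sub_mul hu h0).symm.trans (sq_tsum_eq_two_mul_dsum_add hu h0)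
  have hc := dsum_one_div_sub_sq_mul_sq (fun m n => Even m ∧ Odd n) fun m n h _ => by
    rw [Nat.odd_sub h.le, ← Nat.not_even_iff_odd, ← Nat.not_even_iff_odd]
    tauto
  have hsub : dsum (fun m n => u (m - n) * u n)
      = dsum (fun m n =>
          if Even m ∧ Odd n then 1 / (((m - n : ℕ) : ℝ) ^ 2 * (n : ℝ) ^ 2) else 0) :=
    dsum_congr fun m n h _ => by
      simp only [u, ite_zero_mul_ite_zero, odd_sub_and_odd_iff h.le, one_div_mul_one_div]
  have hmul : dsum (fun m n => u m * u n)
      = dsum (fun m n => if Odd m ∧ Odd n then 1 / ((m : ℝ) ^ 2 * (n : ℝ) ^ 2) else 0) :=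
    dsum_congr fun m n _ _ => by simp only [u, ite_zero_mul_ite_zero, one_div_mul_one_div]
  linarith

lemma dsum_even_even_one_div_sq_mul_mul_sub :
    dsum (fun m n => if Even m ∧ Even n then 1 / ((m : ℝ) ^ 2 * n * (m - n : ℕ)) else 0)
      = dsum (fun m n => 1 / ((m : ℝ) ^ 2 * n * (m - n : ℕ))) / 16 := by
  rw [dsum_ite_even_even, div_eq_inv_mul, ← dsum_const_mul]
  refine dsum_congr fun m n h hn => ?_
  obtain ⟨hn', hm', hmn'⟩ := cast_pos_of_lt h hn
  push_cast [Nat.cast_sub h.le, Nat.cast_sub (by omega : 2 * n ≤ 2 * m)] at hmn' ⊢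
  field_simp
  ring

lemma tsum_odd_sq_sq :
    ∑' p : ℕ, (if Odd p then 1 / (p : ℝ) ^ 2 else 0) ^ 2
      = 15 / 16 * ∑' p : ℕ, (1 / (p : ℝ) ^ 2) ^ 2 := by
  set v : ℕ → ℝ := fun p => (1 / (p : ℝ) ^ 2) ^ 2
  have hv : Summable v :=
    (Real.summable_one_div_nat_pow.2 (by norm_num : 1 < 4)).congr fun p => by simp only [v]; ring
  have hv_even : Summable fun k => v (2 * k) :=
    hv.comp_injective (mul_right_injective₀ two_ne_zero)
  have hv_odd : Summable fun k => v (2 * k + 1) :=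
    hv.comp_injective ((add_left_injective 1).comp (mul_right_injective₀ two_ne_zero))
  have even_part : ∑' k, v (2 * k) = 1 / 16 * ∑' k, v k := by
    rw [← tsum_mul_left]
    exact tsum_congr fun k => by simp only [v]; push_cast; ring
  have hw_even : (fun k => (if Odd (2 * k) then 1 / ((2 * k : ℕ) : ℝ) ^ 2 else 0) ^ 2)
      = fun _ => 0 := by
    ext k; simp
  have hw_odd : (fun k => (if Odd (2 * k + 1) then 1 / ((2 * k + 1 : ℕ) : ℝ) ^ 2 else 0) ^ 2)
      = fun k => v (2 * k + 1) := by
    ext k; simp [v]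
  rw [← tsum_even_add_odd (by rw [hw_even]; exact summable_zero) (by rw [hw_odd]; exact hv_odd),
    hw_even, hw_odd, tsum_zero, zero_add]
  linarith [tsum_even_add_odd hv_even hv_odd]

lemma two_mul_dsum_odd_cube_mul_eq_sub :
    2 * dsum (fun m n => if Odd m then 1 / ((m : ℝ) ^ 3 * n) else 0)
      = dsum (fun m n => if Even m ∧ Odd n then 1 / ((m : ℝ) ^ 2 * (n : ℝ) ^ 2) else 0)
        - dsum (fun m n => if Odd m ∧ Odd n then 1 / ((m : ℝ) ^ 2 * (n : ℝ) ^ 2) else 0) := by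
  have hw := dsummable_one_div_sq_mul_mul_sub
  have classes : dsum (fun m n => 1 / ((m : ℝ) ^ 2 * n * (m - n : ℕ)))
      = dsum (fun m n => if Odd m then 1 / ((m : ℝ) ^ 2 * n * (m - n : ℕ)) else 0)
        + dsum (fun m n => if Even m ∧ Odd n then 1 / ((m : ℝ) ^ 2 * n * (m - n : ℕ)) else 0)
        + dsum (fun m n =>
            if Even m ∧ Even n then 1 / ((m : ℝ) ^ 2 * n * (m - n : ℕ)) else 0) := by
    rw [← dsum_add (hw.ite _) (hw.ite _), ← dsum_add ((hw.ite _).add (hw.ite _)) (hw.ite _)]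
    refine dsum_congr fun m n _ _ => ?_
    by_cases hm : Even m <;> by_cases hn : Even n <;> simp [hm, hn, ← Nat.not_even_iff_odd]
  rw [two_mul_dsum_odd_cube_mul_eq_dsum_mul_sub]
  linarith [dsum_even_even_one_div_sq_mul_mul_sub, tsum_sq_one_div_sq_eq_two_mul_dsum,
    two_mul_dsum_even_odd_add_eq, tsum_odd_sq_sq]

theorem alternating_relation_weight_four :
    2 * dsum (fun m n => 1 / ((m : ℝ) ^ 3 * n))
      = 2 * dsum (fun m n => (-1 : ℝ) ^ m / ((m : ℝ) ^ 3 * n))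
        + dsum (fun m n => (-1 : ℝ) ^ m / ((m : ℝ) ^ 2 * (n : ℝ) ^ 2))
        - dsum (fun m n => (-1 : ℝ) ^ (m + n) / ((m : ℝ) ^ 2 * (n : ℝ) ^ 2)) := by
  have hc := dsummable_one_div_cube_mul
  have he := dsummable_one_div_sq_mul_sq
  have hc' : ∀ e : ℕ → ℕ → ℕ, DSummable fun m n => (-1 : ℝ) ^ e m n / ((m : ℝ) ^ 3 * n) :=
    fun e => hc.neg_one_pow_div e fun m n _ _ => by positivity
  have he' : ∀ e : ℕ → ℕ → ℕ,
      DSummable fun m n => (-1 : ℝ) ^ e m n / ((m : ℝ) ^ 2 * (n : ℝ) ^ 2) :=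
    fun e => he.neg_one_pow_div e fun m n _ _ => by positivity
  have combination := dsum_congr
    (f := fun m n => 2 * (1 / ((m : ℝ) ^ 3 * n)) - 2 * ((-1 : ℝ) ^ m / ((m : ℝ) ^ 3 * n))
      - (-1 : ℝ) ^ m / ((m : ℝ) ^ 2 * (n : ℝ) ^ 2)
      + (-1 : ℝ) ^ (m + n) / ((m : ℝ) ^ 2 * (n : ℝ) ^ 2))
    (g := fun m n => 2 * (2 * (if Odd m then 1 / ((m : ℝ) ^ 3 * n) else 0)
      - ((if Even m ∧ Odd n then 1 / ((m : ℝ) ^ 2 * (n : ℝ) ^ 2) else 0)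
        - (if Odd m ∧ Odd n then 1 / ((m : ℝ) ^ 2 * (n : ℝ) ^ 2) else 0)))) fun m n _ _ => by
    by_cases hm : Even m <;> by_cases hn : Even n <;>
      simp [Nat.even_add, hm, hn, ← Nat.not_even_iff_odd] <;> ring
  rw [dsum_add (((hc.const_mul 2).sub ((hc' _).const_mul 2)).sub (he' _)) (he' _),
    dsum_sub ((hc.const_mul 2).sub ((hc' _).const_mul 2)) (he' _),
    dsum_sub (hc.const_mul 2) ((hc' _).const_mul 2), dsum_const_mul, dsum_const_mul,
    dsum_const_mul, dsum_sub (((hc.ite _).const_mul 2)) ((he.ite _).sub (he.ite _)),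
    dsum_const_mul, dsum_sub (he.ite _) (he.ite _), two_mul_dsum_odd_cube_mul_eq_sub, sub_self,
    mul_zero] at combination
  linarith

end AlternatingEulerSums

theorem stmt_19 :
    (3 * dsum (fun m n => (-1 : ℝ) ^ m / ((m : ℝ) ^ 2 * n))
      = dsum (fun m n => 1 / ((m : ℝ) ^ 2 * n))
        + dsum (fun m n => (-1 : ℝ) ^ n / ((m : ℝ) ^ 2 * n))
        + dsum (fun m n => (-1 : ℝ) ^ (m + n) / ((m : ℝ) ^ 2 * n))) ∧
    (2 * dsum (fun m n => 1 / ((m : ℝ) ^ 3 * n))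
      = 2 * dsum (fun m n => (-1 : ℝ) ^ m / ((m : ℝ) ^ 3 * n))
        + dsum (fun m n => (-1 : ℝ) ^ m / ((m : ℝ) ^ 2 * (n : ℝ) ^ 2))
        - dsum (fun m n => (-1 : ℝ) ^ (m + n) / ((m : ℝ) ^ 2 * (n : ℝ) ^ 2))) :=
  ⟨AlternatingEulerSums.alternating_relation_weight_three,
    AlternatingEulerSums.alternating_relation_weight_four⟩

end
end
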